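/- Weak Deduction Theorem for F_[→,∧]: for all formulas A, B of the implication-conjunction language, {A} ⊢_{F_[→,∧]} B if and only if ⊢_{F_[→,∧]} A→B. -/
import Mathlib


/-- Formulas of the implication-conjunction language `L_[→,∧]`. -/
inductive Fw : Type
  | var : ℕ → Fw
  | imp : Fw → Fw → Fw
  | and : Fw → Fw → Fw

/-- Theorems of the Hilbert system `F_[→,∧]`. -/
inductive FCThm : Fw → Prop
  | id (A : Fw) : FCThm (A.imp A)
  | mp {A B : Fw} : FCThm A → FCThm (A.imp B) → FCThm B
  | afort {A : Fw} (B : Fw) : FCThm A → FCThm (B.imp A)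
  | ax5 (A B : Fw) : FCThm ((A.and B).imp A)
  | ax6 (A B : Fw) : FCThm ((A.and B).imp B)
  | adj {A B : Fw} : FCThm A → FCThm B → FCThm (A.and B)
  | ax8 (A B C : Fw) : FCThm (((A.imp B).and (A.imp C)).imp (A.imp (B.and C)))
  | ax9 (B C D : Fw) : FCThm (((B.imp C).and (C.imp D)).imp (B.imp D))

/-- Derivations from assumptions in `F_[→,∧]`: members of `Γ` and theorems may be used;
rule (3) only applies to theorems; modus ponens only with a theorem major premise;
adjunction is unrestricted. -/
inductive FCDeriv (Γ : Set Fw) : Fw → Prop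
  | hyp {A : Fw} : A ∈ Γ → FCDeriv Γ A
  | thm {A : Fw} : FCThm A → FCDeriv Γ A
  | wmp {A B : Fw} : FCDeriv Γ A → FCThm (A.imp B) → FCDeriv Γ B
  | adj {A B : Fw} : FCDeriv Γ A → FCDeriv Γ B → FCDeriv Γ (A.and B)

/-- Weak Deduction Theorem for `F_[→,∧]`: `{A} ⊢ B` iff `⊢ A → B`. -/
theorem weak_deduction_FC (A B : Fw) :
    FCDeriv ({A} : Set Fw) B ↔ FCThm (A.imp B) := by
  constructor
  · intro h
    induction h with
    | @hyp C hmem => rw [Set.mem_singleton_iff] at hmem; subst hmem; exact FCThm.id C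
    | thm ht => exact FCThm.afort A ht
    | wmp _ ht ih => exact FCThm.mp (FCThm.adj ih ht) (FCThm.ax9 _ _ _)
    | adj _ _ ih1 ih2 => exact FCThm.mp (FCThm.adj ih1 ih2) (FCThm.ax8 _ _ _)
  · intro h
    exact FCDeriv.wmp (FCDeriv.hyp rfl) h
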